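/- Monotone version choice lemma: in the whole-page model, if at every state the pair (disk version, NVM version) satisfies max(disk, nvm) = (version of the last sync-or-writeback event) and latest_dev points to the argmax, then recovery via latest_dev always yields the maximum of the two stored versions; conversely, without latest_dev there exist two traces producing identical (disk, NVM) version pairs but with different correct answers, so no recovery function of (disk, NVM) alone satisfies the sync semantics. -/
import Mathlib


/- Whole-page model with versions drawn from an arbitrary type α (only
   equality available); for part 1 we instantiate α := ℕ.  The field `last`
   tracks the version of the last sync-or-writeback (persisting) event. -/

inductive Dev | disk | nvm
deriving DecidableEq

inductive Event (α : Type)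
  | write (v : α)
  | sync
  | writeback

structure St (α : Type) where
  cache : α
  disk  : α
  nvm   : α
  dirty : Bool
  dev   : Dev
  last  : α   -- version persisted by the last sync-or-writeback event

def step {α : Type} (s : St α) : Event α → St α
  | .write v   => { s with cache := v, dirty := true }
  | .writeback => { s with disk := s.cache, dirty := false, dev := .disk, last := s.cache }
  | .sync      => if s.dirty then
      { s with nvm := s.cache, dirty := false, dev := .nvm, last := s.cache }
    else s

def run {α : Type} (s : St α) (tr : List (Event α)) : St α := tr.foldl step s

def deviceVal {α : Type} (s : St α) : α :=
  match s.dev with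
  | .disk => s.disk
  | .nvm  => s.nvm

def init {α : Type} (v₀ : α) : St α := ⟨v₀, v₀, v₀, false, .disk, v₀⟩

/-- (1) Monotone version choice: if at a state max(disk, nvm) equals the
        version of the last sync-or-writeback event and latest_dev points to
        the argmax, then recovery via latest_dev yields the maximum of the two
        stored versions.
    (2) Conversely, without latest_dev no recovery works: over a version type
        α carrying no ordering information, for any two distinct versions
        there is no function of the (disk, nvm) pair alone that returns the
        last persisted version on all traces — two traces produce identical
        (disk, nvm) pairs but different correct answers. -/
theorem latest_dev_necessary_and_sufficient :
    (∀ s : St ℕ, max s.disk s.nvm = s.last →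
      (s.dev = Dev.disk → s.nvm ≤ s.disk) →
      (s.dev = Dev.nvm → s.disk ≤ s.nvm) →
      deviceVal s = max s.disk s.nvm) ∧
    (∀ (α : Type) (x y : α), x ≠ y →
      ¬ ∃ f : α → α → α, ∀ (v₀ : α) (tr : List (Event α)),
        f (run (init v₀) tr).disk (run (init v₀) tr).nvm = (run (init v₀) tr).last) := by
  constructor
  · intro s hmax hd hn
    cases h : s.dev with
    | disk => simp [deviceVal, h, max_eq_left (hd h)]
    | nvm  => simp [deviceVal, h, max_eq_right (hn h)]
  · intro α x y hxy ⟨f, hf⟩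
    have hA := hf x [.write y, .writeback]
    have hB := hf y [.write x, .sync]
    simp [run, step, init] at hA hB
    exact hxy (hB ▸ hA)
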